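/- For every nonnegative integer k, the map a ↦ δ_a from ℝ^n to the Sobolev space H^{-n/2-k-1}(ℝ^n), sending a point to the Dirac delta distribution at a, is of class C^k. -/

import Mathlib

open MeasureTheory Complex
open scoped RealInnerProductSpace ENNReal Topology

/-- The weighted measure `(1 + |ξ|²)^s dξ` on `ℝⁿ`, so that the Sobolev space `H^s(ℝⁿ)`
is identified, via the Fourier transform, with `L²` of this measure. -/
noncomputable def sobolevWeight (n : ℕ) (s : ℝ) :
    Measure (EuclideanSpace ℝ (Fin n)) :=
  volume.withDensity (fun ξ => ENNReal.ofReal ((1 + ‖ξ‖ ^ 2) ^ s))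

namespace DiracSobolev

variable {n : ℕ} {s : ℝ}

abbrev Euc (n : ℕ) := EuclideanSpace ℝ (Fin n)

noncomputable def w (n : ℕ) (s : ℝ) (ξ : Euc n) : ℝ≥0∞ :=
  ENNReal.ofReal ((1 + ‖ξ‖ ^ 2) ^ s)

lemma w_meas : Measurable (w n s) := by
  unfold w; fun_prop

lemma sobolevWeight_eq : sobolevWeight n s = volume.withDensity (w n s) := rfl

lemma one_add_sq_pos (ξ : Euc n) : (0:ℝ) < 1 + ‖ξ‖ ^ 2 := by positivity

lemma w_ne_zero (ξ : Euc n) : w n s ξ ≠ 0 := by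
  simp only [w, ne_eq, ENNReal.ofReal_eq_zero, not_le]
  exact Real.rpow_pos_of_pos (one_add_sq_pos ξ) s

lemma w_ne_top (ξ : Euc n) : w n s ξ ≠ ∞ := ENNReal.ofReal_ne_top

lemma ac1 : sobolevWeight n s ≪ (volume : Measure (Euc n)) :=
  withDensity_absolutelyContinuous _ _

lemma ac2 : (volume : Measure (Euc n)) ≪ sobolevWeight n s :=
  withDensity_absolutelyContinuous' w_meas.aemeasurable
    (Filter.Eventually.of_forall fun ξ => w_ne_zero ξ)

lemma ac12 {s t : ℝ} : sobolevWeight n s ≪ sobolevWeight n t := ac1.trans ac2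

lemma W_fin (hs : s < -((n:ℝ)/2)) : ∫⁻ ξ, w n s ξ ∂(volume : Measure (Euc n)) ≠ ∞ := by
  have h : Integrable (fun ξ : Euc n => ((1:ℝ) + ‖ξ‖ ^ 2) ^ (-(-2*s) / 2)) volume := by
    apply integrable_rpow_neg_one_add_norm_sq
    rw [finrank_euclideanSpace, Fintype.card_fin]
    linarith
  have h2 : Integrable (fun ξ : Euc n => ((1:ℝ) + ‖ξ‖ ^ 2) ^ s) volume := by
    convert h using 2 with ξ; ring_nf
  simpa [w] using h2.lintegral_lt_top.ne

/-- The square of the weighted L² norm as a lower Lebesgue integral over `volume`. -/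
noncomputable def J (n : ℕ) (s : ℝ) (f : Euc n → ℂ) : ℝ≥0∞ :=
  ∫⁻ ξ, w n s ξ * ((‖f ξ‖₊ : ℝ≥0∞)) ^ (2:ℝ) ∂(volume : Measure (Euc n))

lemma J_eq {f : Euc n → ℂ} (hf : AEMeasurable f (volume : Measure (Euc n))) :
    eLpNorm f 2 (sobolevWeight n s) = (J n s f) ^ ((1:ℝ)/2) := by
  rw [eLpNorm_eq_lintegral_rpow_enorm_toReal (by norm_num) (by norm_num), sobolevWeight_eq]
  have : ∫⁻ ξ, ‖f ξ‖ₑ ^ ((2:ℝ≥0∞).toReal) ∂(volume.withDensity (w n s))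
      = J n s f := by
    rw [lintegral_withDensity_eq_lintegral_mul₀ w_meas.aemeasurable
      (by fun_prop : AEMeasurable (fun ξ => ‖f ξ‖ₑ ^ ((2:ℝ≥0∞).toReal)) _)]
    simp [J]; rfl
  rw [this]
  norm_num

lemma J_mono {f g : Euc n → ℂ} (h : ∀ ξ, ‖f ξ‖ ≤ ‖g ξ‖) : J n s f ≤ J n s g := by
  refine lintegral_mono fun ξ => ?_
  have h2 : (‖f ξ‖₊ : ℝ≥0∞) ≤ (‖g ξ‖₊ : ℝ≥0∞) := by exact_mod_cast h ξ
  exact mul_le_mul_right (ENNReal.rpow_le_rpow h2 (by norm_num)) _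

lemma memJ {f : Euc n → ℂ} (hf : AEStronglyMeasurable f (volume : Measure (Euc n)))
    (hJ : J n s f ≠ ∞) : MemLp f 2 (sobolevWeight n s) := by
  refine ⟨hf.mono_ac ac1, ?_⟩
  rw [J_eq hf.aemeasurable]
  exact ENNReal.rpow_lt_top_of_nonneg (by norm_num) hJ

/-- the function `a ↦ δ_a` on the Fourier side -/
noncomputable def phi (a : Euc n) : Euc n → ℂ :=
  fun ξ => Complex.exp (-(⟪a, ξ⟫ : ℝ) * Complex.I)

lemma phi_cont (a : Euc n) : Continuous (phi a) := by
  have h1 : Continuous fun ξ : Euc n => (⟪a, ξ⟫ : ℝ) := continuous_const.inner continuous_id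
  exact Complex.continuous_exp.comp (((Complex.continuous_ofReal.comp h1).neg).mul continuous_const)

lemma norm_phi (a ξ : Euc n) : ‖phi a ξ‖ = 1 := by
  simp only [phi, ← Complex.ofReal_neg]
  exact Complex.norm_exp_ofReal_mul_I _

lemma J_phi_le (a : Euc n) : J n s (phi a) ≤ ∫⁻ ξ, w n s ξ ∂(volume : Measure (Euc n)) := by
  refine lintegral_mono fun ξ => ?_
  have h1 : ‖phi a ξ‖₊ = 1 := by
    rw [← NNReal.coe_inj, coe_nnnorm, norm_phi]; simp
  rw [h1]
  simp

lemma mem_phi (hs : s < -((n:ℝ)/2)) (a : Euc n) : MemLp (phi a) 2 (sobolevWeight n s) :=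
  memJ (phi_cont a).aestronglyMeasurable ((J_phi_le a).trans_lt (W_fin hs).lt_top).ne

/-- The elementary estimate `|e^{ix} - 1 - ix| ≤ 3 min(x², |x|)`. -/
lemma key1 (x : ℝ) : ‖Complex.exp (↑x * Complex.I) - 1 - ↑x * Complex.I‖ ≤ 3 * min (x^2) |x| := by
  have habsI : ‖(↑x * Complex.I : ℂ)‖ = |x| := by
    rw [norm_mul, Complex.norm_real, Complex.norm_I, mul_one, Real.norm_eq_abs]
  rcases le_or_gt |x| 1 with hx | hx
  · have h2 : ‖(↑x * Complex.I : ℂ)‖ ≤ 1 := by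
      rw [habsI]; exact hx
    have := Complex.norm_exp_sub_one_sub_id_le h2
    have h3 : ‖(↑x * Complex.I : ℂ)‖ ^ 2 = x ^ 2 := by
      rw [habsI, _root_.sq_abs]
    rw [h3] at this
    have hmin : min (x^2) |x| = x^2 := by
      refine min_eq_left ?_
      nlinarith [abs_nonneg x, _root_.sq_abs x]
    rw [hmin]
    nlinarith [sq_nonneg x]
  · have h1 : ‖Complex.exp (↑x * Complex.I) - 1 - ↑x * Complex.I‖
        ≤ ‖Complex.exp (↑x * Complex.I)‖ + ‖(1:ℂ)‖ + ‖(↑x * Complex.I : ℂ)‖ := by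
      calc ‖Complex.exp (↑x * Complex.I) - 1 - ↑x * Complex.I‖
          ≤ ‖Complex.exp (↑x * Complex.I) - 1‖ + ‖(↑x * Complex.I : ℂ)‖ := norm_sub_le _ _
        _ ≤ (‖Complex.exp (↑x * Complex.I)‖ + ‖(1:ℂ)‖) + ‖(↑x * Complex.I : ℂ)‖ := by
            gcongr; exact norm_sub_le _ _
    have h2 : ‖Complex.exp (↑x * Complex.I)‖ = 1 := by
      exact Complex.norm_exp_ofReal_mul_I x
    have hmin : min (x^2) |x| = |x| := by
      refine min_eq_right ?_
      nlinarith [abs_nonneg x, _root_.sq_abs x]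
    rw [hmin]
    rw [h2, habsI, norm_one] at h1
    linarith

lemma key2 (x : ℝ) : ‖Complex.exp (↑x * Complex.I) - 1‖ ≤ 4 * |x| := by
  have h := key1 x
  have : ‖Complex.exp (↑x * Complex.I) - 1‖
      ≤ ‖Complex.exp (↑x * Complex.I) - 1 - ↑x * Complex.I‖ + ‖(↑x * Complex.I : ℂ)‖ := by
    have := norm_add_le (Complex.exp (↑x * Complex.I) - 1 - ↑x * Complex.I) (↑x * Complex.I)
    simpa using this
  have habsI : ‖(↑x * Complex.I : ℂ)‖ = |x| := by
    rw [norm_mul, Complex.norm_real, Complex.norm_I, mul_one, Real.norm_eq_abs]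
  rw [habsI] at this
  have hm : min (x^2) |x| ≤ |x| := min_le_right _ _
  nlinarith

/-- the multiplier `-i⟨v,ξ⟩`. -/
noncomputable def cf (v : Euc n) (ξ : Euc n) : ℂ := -(⟪v, ξ⟫ : ℝ) * Complex.I

lemma cf_cont (v : Euc n) : Continuous (cf v) := by
  have h1 : Continuous fun ξ : Euc n => (⟪v, ξ⟫ : ℝ) := continuous_const.inner continuous_id
  exact ((Complex.continuous_ofReal.comp h1).neg).mul continuous_const

lemma norm_cf_le (v ξ : Euc n) : ‖cf v ξ‖ ≤ ‖v‖ * ‖ξ‖ := by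
  have : ‖cf v ξ‖ = |(⟪v, ξ⟫ : ℝ)| := by
    simp only [cf, ← Complex.ofReal_neg, norm_mul, Complex.norm_real,
      Complex.norm_I, mul_one, Real.norm_eq_abs, abs_neg]
  rw [this]
  exact abs_real_inner_le_norm v ξ

lemma cf_add (v v' ξ : Euc n) : cf (v + v') ξ = cf v ξ + cf v' ξ := by
  simp only [cf, inner_add_left]; push_cast; ring

lemma cf_smul (c : ℝ) (v ξ : Euc n) : cf (c • v) ξ = (c : ℂ) * cf v ξ := by
  simp only [cf, real_inner_smul_left]; push_cast; ring

lemma enorm_eq (z : ℂ) : (‖z‖₊ : ℝ≥0∞) = ENNReal.ofReal ‖z‖ := (ofReal_norm z).symm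

lemma J_mul_le (v : Euc n) (g : Euc n → ℂ) :
    J n s (fun ξ => cf v ξ * g ξ) ≤ (ENNReal.ofReal ‖v‖) ^ (2:ℝ) * J n (s+1) g := by
  rw [J, J, ← lintegral_const_mul' _ _ (by simp : (ENNReal.ofReal ‖v‖) ^ (2:ℝ) ≠ ∞)]
  refine lintegral_mono fun ξ => ?_
  have hsplit : ((‖cf v ξ * g ξ‖₊ : ℝ≥0∞)) ^ (2:ℝ)
      = ((‖cf v ξ‖₊ : ℝ≥0∞)) ^ (2:ℝ) * ((‖g ξ‖₊ : ℝ≥0∞)) ^ (2:ℝ) := by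
    rw [nnnorm_mul, ENNReal.coe_mul, ENNReal.mul_rpow_of_nonneg _ _ (by norm_num)]
  rw [hsplit, ← mul_assoc, ← mul_assoc]
  gcongr ?_ * _
  -- reduce to a real inequality
  have hb : w n s ξ * ((‖cf v ξ‖₊ : ℝ≥0∞)) ^ (2:ℝ)
      = ENNReal.ofReal ((1 + ‖ξ‖ ^ 2) ^ s * ‖cf v ξ‖ ^ 2) := by
    rw [enorm_eq, show ((2:ℝ)) = ((2:ℕ):ℝ) by norm_num, ENNReal.rpow_natCast,
      ← ENNReal.ofReal_pow (norm_nonneg _), w,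
      ← ENNReal.ofReal_mul (Real.rpow_nonneg (one_add_sq_pos ξ).le s)]
  have hb2 : (ENNReal.ofReal ‖v‖) ^ (2:ℝ) * w n (s+1) ξ
      = ENNReal.ofReal (‖v‖ ^ 2 * (1 + ‖ξ‖ ^ 2) ^ (s+1)) := by
    rw [show ((2:ℝ)) = ((2:ℕ):ℝ) by norm_num, ENNReal.rpow_natCast,
      ← ENNReal.ofReal_pow (norm_nonneg _), w,
      ← ENNReal.ofReal_mul (by positivity)]
  rw [hb, hb2]
  apply ENNReal.ofReal_le_ofReal
  have hcf : ‖cf v ξ‖ ^ 2 ≤ ‖v‖ ^ 2 * (1 + ‖ξ‖ ^ 2) := by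
    have h1 := norm_cf_le v ξ
    nlinarith [norm_nonneg (cf v ξ), norm_nonneg v, norm_nonneg ξ, sq_nonneg (‖v‖ * ‖ξ‖),
      sq_nonneg ‖v‖]
  calc (1 + ‖ξ‖ ^ 2) ^ s * ‖cf v ξ‖ ^ 2
      ≤ (1 + ‖ξ‖ ^ 2) ^ s * (‖v‖ ^ 2 * (1 + ‖ξ‖ ^ 2)) := by
        exact mul_le_mul_of_nonneg_left hcf (Real.rpow_nonneg (one_add_sq_pos ξ).le s)
    _ = ‖v‖ ^ 2 * (1 + ‖ξ‖ ^ 2) ^ (s+1) := by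
        rw [Real.rpow_add_one (one_add_sq_pos ξ).ne']; ring

lemma J_lt_top_of_Lp (g : Lp ℂ 2 (sobolevWeight n s)) :
    J n s (⇑g) < ∞ := by
  have hm : AEMeasurable (⇑g) (volume : Measure (Euc n)) :=
    ((Lp.aestronglyMeasurable g).mono_ac ac2).aemeasurable
  have h := Lp.eLpNorm_lt_top g
  rw [J_eq hm] at h
  by_contra hc
  rw [not_lt, top_le_iff] at hc
  rw [hc] at h
  simp [ENNReal.top_rpow_of_pos] at h

lemma J_rpow_eq_eLpNorm {f : Euc n → ℂ} (hf : AEMeasurable f (volume : Measure (Euc n))) :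
    (J n s f) ^ ((1:ℝ)/2) = eLpNorm f 2 (sobolevWeight n s) := (J_eq hf).symm

lemma mem_mul (v : Euc n) (g : Lp ℂ 2 (sobolevWeight n (s+1))) :
    MemLp (fun ξ => cf v ξ * g ξ) 2 (sobolevWeight n s) := by
  have hg : AEStronglyMeasurable (⇑g) (volume : Measure (Euc n)) :=
    (Lp.aestronglyMeasurable g).mono_ac ac2
  refine memJ (((cf_cont v).aestronglyMeasurable).mul hg) ?_
  refine ((J_mul_le v (⇑g)).trans_lt ?_).ne
  exact ENNReal.mul_lt_top (ENNReal.rpow_lt_top_of_nonneg (by norm_num) ENNReal.ofReal_ne_top)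
    (J_lt_top_of_Lp g)

lemma norm_mem_mul_le (v : Euc n) (g : Lp ℂ 2 (sobolevWeight n (s+1))) :
    ‖(mem_mul v g).toLp _‖ ≤ ‖v‖ * ‖g‖ := by
  have hg : AEMeasurable (⇑g) (volume : Measure (Euc n)) :=
    ((Lp.aestronglyMeasurable g).mono_ac ac2).aemeasurable
  have hmeas : AEMeasurable (fun ξ => cf v ξ * g ξ) (volume : Measure (Euc n)) := by
    exact ((cf_cont v).aestronglyMeasurable.mul hg.aestronglyMeasurable).aemeasurable
  rw [Lp.norm_toLp, J_eq hmeas]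
  have hle : (J n s (fun ξ => cf v ξ * g ξ)) ^ ((1:ℝ)/2)
      ≤ ENNReal.ofReal ‖v‖ * eLpNorm (⇑g) 2 (sobolevWeight n (s+1)) := by
    calc (J n s (fun ξ => cf v ξ * g ξ)) ^ ((1:ℝ)/2)
        ≤ ((ENNReal.ofReal ‖v‖) ^ (2:ℝ) * J n (s+1) (⇑g)) ^ ((1:ℝ)/2) := by
          exact ENNReal.rpow_le_rpow (J_mul_le v (⇑g)) (by norm_num)
      _ = ENNReal.ofReal ‖v‖ * (J n (s+1) (⇑g)) ^ ((1:ℝ)/2) := by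
          rw [ENNReal.mul_rpow_of_nonneg _ _ (by norm_num), ← ENNReal.rpow_mul]
          norm_num
      _ = ENNReal.ofReal ‖v‖ * eLpNorm (⇑g) 2 (sobolevWeight n (s+1)) := by
          rw [J_rpow_eq_eLpNorm hg]
  calc ((J n s (fun ξ => cf v ξ * g ξ)) ^ ((1:ℝ)/2)).toReal
      ≤ (ENNReal.ofReal ‖v‖ * eLpNorm (⇑g) 2 (sobolevWeight n (s+1))).toReal := by
        refine ENNReal.toReal_mono ?_ hle
        exact ENNReal.mul_ne_top (by simp) (Lp.eLpNorm_ne_top g)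
    _ = ‖v‖ * ‖g‖ := by
        rw [ENNReal.toReal_mul, ENNReal.toReal_ofReal (norm_nonneg v), Lp.norm_def]

noncomputable def mulB (n : ℕ) (s : ℝ) :
    Euc n →ₗ[ℝ] (Lp ℂ 2 (sobolevWeight n (s+1))) →ₗ[ℝ] Lp ℂ 2 (sobolevWeight n s) :=
  LinearMap.mk₂ ℝ (fun v g => (mem_mul v g).toLp _)
    (fun v v' g => by
      refine (MemLp.toLp_congr _ ((mem_mul v g).add (mem_mul v' g)) ?_).trans
        (MemLp.toLp_add _ _)
      refine Filter.Eventually.of_forall fun ξ => ?_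
      show cf (v + v') ξ * g ξ = cf v ξ * g ξ + cf v' ξ * g ξ
      rw [cf_add]; ring)
    (fun c v g => by
      refine (MemLp.toLp_congr _ ((mem_mul v g).const_smul c) ?_).trans
        (MemLp.toLp_const_smul _ _)
      refine Filter.Eventually.of_forall fun ξ => ?_
      show cf (c • v) ξ * g ξ = c • (cf v ξ * g ξ)
      rw [cf_smul, Complex.real_smul]; ring)
    (fun v g g' => by
      have h : (⇑(g + g') : Euc n → ℂ) =ᵐ[sobolevWeight n s] ⇑g + ⇑g' :=
        (Lp.coeFn_add g g').filter_mono ac12.ae_le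
      refine (MemLp.toLp_congr _ ((mem_mul v g).add (mem_mul v g')) ?_).trans
        (MemLp.toLp_add _ _)
      filter_upwards [h] with ξ hξ
      show cf v ξ * (⇑(g + g')) ξ = cf v ξ * g ξ + cf v ξ * g' ξ
      rw [hξ, Pi.add_apply]; ring)
    (fun c v g => by
      have h : (⇑(c • g) : Euc n → ℂ) =ᵐ[sobolevWeight n s] c • ⇑g :=
        (Lp.coeFn_smul c g).filter_mono ac12.ae_le
      refine (MemLp.toLp_congr _ ((mem_mul v g).const_smul c) ?_).trans
        (MemLp.toLp_const_smul _ _)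
      filter_upwards [h] with ξ hξ
      show cf v ξ * (⇑(c • g)) ξ = c • (cf v ξ * g ξ)
      rw [hξ, Pi.smul_apply, Complex.real_smul, Complex.real_smul]; ring)

noncomputable def mulT (n : ℕ) (s : ℝ) :
    (Lp ℂ 2 (sobolevWeight n (s+1))) →L[ℝ] (Euc n →L[ℝ] Lp ℂ 2 (sobolevWeight n s)) :=
  (LinearMap.mkContinuous₂ (mulB n s) 1 (fun v g => by
    rw [one_mul]; exact norm_mem_mul_le v g)).flip

lemma mulT_apply (g : Lp ℂ 2 (sobolevWeight n (s+1))) (v : Euc n) :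
    mulT n s g v = (mem_mul v g).toLp _ := rfl

lemma phi_cont_a (ξ : Euc n) : Continuous fun a : Euc n => phi a ξ := by
  have h1 : Continuous fun a : Euc n => (⟪a, ξ⟫ : ℝ) := continuous_id.inner continuous_const
  exact Complex.continuous_exp.comp (((Complex.continuous_ofReal.comp h1).neg).mul continuous_const)

lemma aux_tendsto {α : Type*} {l : Filter α} {Jf : α → ℝ≥0∞} (h : Filter.Tendsto Jf l (𝓝 0)) :
    Filter.Tendsto (fun b => ((Jf b) ^ ((1:ℝ)/2)).toReal) l (𝓝 0) := by
  have h1 : Filter.Tendsto (fun b => (Jf b) ^ ((1:ℝ)/2)) l (𝓝 0) := by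
    have h2 := (ENNReal.continuous_rpow_const (y := (1:ℝ)/2)).tendsto 0
    rw [show ((0:ℝ≥0∞) ^ ((1:ℝ)/2)) = 0 from ENNReal.zero_rpow_of_pos (by norm_num)] at h2
    exact h2.comp h
  have := (ENNReal.tendsto_toReal (show (0:ℝ≥0∞) ≠ ⊤ by simp)).comp h1
  simp only [ENNReal.toReal_zero] at this
  exact this

lemma two_rpow_two : ((2:ℝ≥0∞)) ^ (2:ℝ) = 4 := by
  rw [show ((2:ℝ)) = ((2:ℕ):ℝ) by norm_num, ENNReal.rpow_natCast]; norm_num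

lemma enorm_sq_le {z : ℂ} {r : ℝ} (h : ‖z‖ ≤ r) :
    ((‖z‖₊ : ℝ≥0∞)) ^ (2:ℝ) ≤ ENNReal.ofReal (r ^ 2) := by
  rw [enorm_eq, show ((2:ℝ)) = ((2:ℕ):ℝ) by norm_num, ENNReal.rpow_natCast,
    ← ENNReal.ofReal_pow (norm_nonneg z)]
  apply ENNReal.ofReal_le_ofReal
  have h0 := norm_nonneg z
  nlinarith

noncomputable def Fmap (hs : s < -((n:ℝ)/2)) : Euc n → Lp ℂ 2 (sobolevWeight n s) :=
  fun a => (mem_phi hs a).toLp _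

lemma continuous_Fmap (hs : s < -((n:ℝ)/2)) : Continuous (Fmap hs) := by
  rw [continuous_iff_continuousAt]
  intro a
  rw [ContinuousAt, tendsto_iff_dist_tendsto_zero]
  have hdist : ∀ b, dist (Fmap hs b) (Fmap hs a)
      = ((J n s (fun ξ => phi b ξ - phi a ξ)) ^ ((1:ℝ)/2)).toReal := by
    intro b
    rw [dist_eq_norm]
    simp only [Fmap]
    rw [← MemLp.toLp_sub, Lp.norm_toLp]
    have hm : AEMeasurable (phi b - phi a) (volume : Measure (Euc n)) :=
      ((phi_cont b).sub (phi_cont a)).measurable.aemeasurable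
    rw [J_eq hm]
    rfl
  have hJ : Filter.Tendsto (fun b => J n s (fun ξ => phi b ξ - phi a ξ)) (𝓝 a) (𝓝 0) := by
    have h0 : (𝓝 (0:ℝ≥0∞)) = 𝓝 (∫⁻ ξ, (fun _ : Euc n => (0:ℝ≥0∞)) ξ ∂(volume : Measure (Euc n))) := by
      simp
    rw [h0]
    refine tendsto_lintegral_filter_of_dominated_convergence (fun ξ => w n s ξ * 4)
      ?_ ?_ ?_ ?_
    · refine Filter.Eventually.of_forall fun b => ?_
      apply w_meas.mul
      have : Measurable fun ξ => phi b ξ - phi a ξ := ((phi_cont b).sub (phi_cont a)).measurable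
      fun_prop
    · refine Filter.Eventually.of_forall fun b => Filter.Eventually.of_forall fun ξ => ?_
      have hb : ‖phi b ξ - phi a ξ‖ ≤ 2 := by
        have := norm_sub_le (phi b ξ) (phi a ξ)
        rw [norm_phi, norm_phi] at this
        linarith
      have := enorm_sq_le hb
      calc w n s ξ * ((‖phi b ξ - phi a ξ‖₊ : ℝ≥0∞)) ^ (2:ℝ)
          ≤ w n s ξ * ENNReal.ofReal ((2:ℝ) ^ 2) := mul_le_mul_right this _
        _ = w n s ξ * 4 := by norm_num
    · rw [lintegral_mul_const' 4 _ (by norm_num)]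
      exact ENNReal.mul_ne_top (W_fin hs) (by norm_num)
    · refine Filter.Eventually.of_forall fun ξ => ?_
      have hcont : Filter.Tendsto (fun b => ENNReal.ofReal (‖phi b ξ - phi a ξ‖ ^ 2)) (𝓝 a)
          (𝓝 0) := by
        have hreal : Filter.Tendsto (fun b => ‖phi b ξ - phi a ξ‖ ^ 2) (𝓝 a) (𝓝 0) := by
          have hc : Continuous fun b : Euc n => ‖phi b ξ - phi a ξ‖ ^ 2 :=
            (((phi_cont_a ξ).sub continuous_const).norm).pow 2
          have := hc.tendsto a
          simpa using this
        have := (ENNReal.continuous_ofReal.tendsto 0).comp hreal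
        simp only [ENNReal.ofReal_zero] at this
        exact this
      have : Filter.Tendsto (fun b => w n s ξ * ENNReal.ofReal (‖phi b ξ - phi a ξ‖ ^ 2)) (𝓝 a)
          (𝓝 0) := by
        simpa using ENNReal.Tendsto.const_mul hcont (Or.inr (w_ne_top ξ))
      refine this.congr fun b => ?_
      rw [enorm_eq, show ((2:ℝ)) = ((2:ℕ):ℝ) by norm_num, ENNReal.rpow_natCast,
        ← ENNReal.ofReal_pow (norm_nonneg _)]
  have := aux_tendsto hJ
  exact this.congr fun b => (hdist b).symm

lemma mem_cfphi (hs1 : s + 1 < -((n:ℝ)/2)) (v a : Euc n) :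
    MemLp (fun ξ => cf v ξ * phi a ξ) 2 (sobolevWeight n s) := by
  refine memJ ((cf_cont v).aestronglyMeasurable.mul (phi_cont a).aestronglyMeasurable) ?_
  refine ((J_mul_le v (phi a)).trans_lt ?_).ne
  refine ENNReal.mul_lt_top (ENNReal.rpow_lt_top_of_nonneg (by norm_num) ENNReal.ofReal_ne_top) ?_
  exact (J_phi_le a).trans_lt (W_fin hs1).lt_top

lemma r_eq (a b ξ : Euc n) :
    phi b ξ - phi a ξ - cf (b - a) ξ * phi a ξ
      = phi a ξ * (Complex.exp (↑(-(⟪b - a, ξ⟫ : ℝ)) * Complex.I) - 1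
          - ↑(-(⟪b - a, ξ⟫ : ℝ)) * Complex.I) := by
  have hsplit : (⟪b, ξ⟫ : ℝ) = ⟪a, ξ⟫ + ⟪b - a, ξ⟫ := by
    have := inner_sub_left (𝕜 := ℝ) b a ξ
    linarith
  have hb : phi b ξ = phi a ξ * Complex.exp (↑(-(⟪b - a, ξ⟫ : ℝ)) * Complex.I) := by
    simp only [phi]
    rw [← Complex.exp_add]
    congr 1
    rw [hsplit]
    push_cast
    ring
  rw [hb]
  simp only [cf]
  push_cast
  ring

lemma norm_r (a b ξ : Euc n) :
    ‖phi b ξ - phi a ξ - cf (b - a) ξ * phi a ξ‖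
      ≤ 3 * min ((⟪b - a, ξ⟫ : ℝ)^2) |(⟪b - a, ξ⟫ : ℝ)| := by
  rw [r_eq, norm_mul, norm_phi, one_mul]
  have := key1 (-(⟪b - a, ξ⟫ : ℝ))
  simpa using this

lemma sq_helper {c rz q : ℝ} (hc : 0 ≤ c) (hrz : 0 ≤ rz) (h : c * rz ≤ q) :
    ENNReal.ofReal c ^ (2:ℝ) * ENNReal.ofReal rz ^ (2:ℝ) ≤ ENNReal.ofReal (q ^ 2) := by
  rw [show ((2:ℝ)) = ((2:ℕ):ℝ) by norm_num, ENNReal.rpow_natCast, ENNReal.rpow_natCast,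
    ← ENNReal.ofReal_pow hc, ← ENNReal.ofReal_pow hrz, ← ENNReal.ofReal_mul (by positivity)]
  apply ENNReal.ofReal_le_ofReal
  have hq : 0 ≤ q := le_trans (by positivity) h
  nlinarith [mul_nonneg hc hrz, sq_nonneg (q - c * rz), mul_le_mul h h (mul_nonneg hc hrz) hq]

lemma inv_mul_le (t q : ℝ) (_ht : 0 ≤ t) (hq : 0 ≤ q) : t⁻¹ * (t * q) ≤ q := by
  rcases eq_or_ne t 0 with h | h
  · simp [h, hq]
  · rw [← mul_assoc, inv_mul_cancel₀ h, one_mul]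

lemma hasFDerivAt_Fmap (hs1 : s + 1 < -((n:ℝ)/2)) (a : Euc n) :
    HasFDerivAt (Fmap (show s < -((n:ℝ)/2) by linarith))
      ((mulT n s) (Fmap hs1 a)) a := by
  have hs : s < -((n:ℝ)/2) := by linarith
  rw [hasFDerivAt_iff_tendsto]
  -- identify the remainder as an explicit `toLp`
  have hrem : ∀ b, Fmap hs b - Fmap hs a - (mulT n s) (Fmap hs1 a) (b - a)
      = (((mem_phi hs b).sub (mem_phi hs a)).sub (mem_cfphi hs1 (b - a) a)).toLp
          (fun ξ => phi b ξ - phi a ξ - cf (b - a) ξ * phi a ξ) := by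
    intro b
    have hT : (mulT n s) (Fmap hs1 a) (b - a) = (mem_cfphi hs1 (b - a) a).toLp _ := by
      rw [mulT_apply]
      refine MemLp.toLp_congr _ _ ?_
      have hcoe : (⇑(Fmap hs1 a) : Euc n → ℂ) =ᵐ[sobolevWeight n s] phi a :=
        (MemLp.coeFn_toLp (mem_phi hs1 a)).filter_mono ac12.ae_le
      filter_upwards [hcoe] with ξ hξ
      show cf (b - a) ξ * (⇑(Fmap hs1 a)) ξ = cf (b - a) ξ * phi a ξ
      rw [hξ]
    rw [hT]
    simp only [Fmap]
    rw [← MemLp.toLp_sub, ← MemLp.toLp_sub]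
    rfl
  -- express the norm through `J`
  have hcontr : ∀ b, Continuous fun ξ => phi b ξ - phi a ξ - cf (b - a) ξ * phi a ξ := fun b =>
    ((phi_cont b).sub (phi_cont a)).sub ((cf_cont (b - a)).mul (phi_cont a))
  have hnorm : ∀ b, ‖Fmap hs b - Fmap hs a - (mulT n s) (Fmap hs1 a) (b - a)‖
      = ((J n s (fun ξ => phi b ξ - phi a ξ - cf (b - a) ξ * phi a ξ)) ^ ((1:ℝ)/2)).toReal := by
    intro b
    rw [hrem b, Lp.norm_toLp, J_eq (hcontr b).measurable.aemeasurable]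
  -- the main quantity
  set A : Euc n → ℝ≥0∞ := fun b =>
    ENNReal.ofReal (‖b - a‖⁻¹) ^ (2:ℝ)
      * J n s (fun ξ => phi b ξ - phi a ξ - cf (b - a) ξ * phi a ξ) with hA_def
  have hAtendsto : Filter.Tendsto A (𝓝 a) (𝓝 0) := by
    have hG : ∀ b, A b = ∫⁻ ξ, ENNReal.ofReal (‖b - a‖⁻¹) ^ (2:ℝ)
        * (w n s ξ * ((‖phi b ξ - phi a ξ - cf (b - a) ξ * phi a ξ‖₊ : ℝ≥0∞)) ^ (2:ℝ))
        ∂(volume : Measure (Euc n)) := by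
      intro b
      simp only [hA_def]
      unfold J
      rw [← lintegral_const_mul' _ _ (by simp : ENNReal.ofReal (‖b - a‖⁻¹) ^ (2:ℝ) ≠ ∞)]
    have hmain : Filter.Tendsto (fun b => ∫⁻ ξ, ENNReal.ofReal (‖b - a‖⁻¹) ^ (2:ℝ)
        * (w n s ξ * ((‖phi b ξ - phi a ξ - cf (b - a) ξ * phi a ξ‖₊ : ℝ≥0∞)) ^ (2:ℝ))
        ∂(volume : Measure (Euc n))) (𝓝 a)
        (𝓝 (∫⁻ ξ, (fun _ : Euc n => (0:ℝ≥0∞)) ξ ∂(volume : Measure (Euc n)))) := by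
      refine tendsto_lintegral_filter_of_dominated_convergence
        (fun ξ => w n s ξ * ENNReal.ofReal ((3 * ‖ξ‖) ^ 2)) ?_ ?_ ?_ ?_
      · refine Filter.Eventually.of_forall fun b => ?_
        have hmr : Measurable fun ξ => phi b ξ - phi a ξ - cf (b - a) ξ * phi a ξ :=
          (hcontr b).measurable
        apply Measurable.const_mul
        apply w_meas.mul
        fun_prop
      · refine Filter.Eventually.of_forall fun b => Filter.Eventually.of_forall fun ξ => ?_
        -- bound : |b-a|⁻¹ ‖r‖ ≤ 3‖ξ‖
        have hq : ‖b - a‖⁻¹ * ‖phi b ξ - phi a ξ - cf (b - a) ξ * phi a ξ‖ ≤ 3 * ‖ξ‖ := by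
          have h1 := norm_r a b ξ
          have h2 : min ((⟪b - a, ξ⟫ : ℝ)^2) |(⟪b - a, ξ⟫ : ℝ)| ≤ |(⟪b - a, ξ⟫ : ℝ)| :=
            min_le_right _ _
          have h3 : |(⟪b - a, ξ⟫ : ℝ)| ≤ ‖b - a‖ * ‖ξ‖ := abs_real_inner_le_norm _ _
          have h4 : ‖phi b ξ - phi a ξ - cf (b - a) ξ * phi a ξ‖ ≤ ‖b - a‖ * (3 * ‖ξ‖) := by
            nlinarith
          calc ‖b - a‖⁻¹ * ‖phi b ξ - phi a ξ - cf (b - a) ξ * phi a ξ‖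
              ≤ ‖b - a‖⁻¹ * (‖b - a‖ * (3 * ‖ξ‖)) := by
                apply mul_le_mul_of_nonneg_left h4 (by positivity)
            _ ≤ 3 * ‖ξ‖ := inv_mul_le _ _ (norm_nonneg _) (by positivity)
        have := sq_helper (c := ‖b - a‖⁻¹) (rz := ‖phi b ξ - phi a ξ - cf (b - a) ξ * phi a ξ‖)
          (by positivity) (norm_nonneg _) hq
        rw [← enorm_eq] at this
        calc ENNReal.ofReal (‖b - a‖⁻¹) ^ (2:ℝ)
              * (w n s ξ * ((‖phi b ξ - phi a ξ - cf (b - a) ξ * phi a ξ‖₊ : ℝ≥0∞)) ^ (2:ℝ))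
            = w n s ξ * (ENNReal.ofReal (‖b - a‖⁻¹) ^ (2:ℝ)
              * ((‖phi b ξ - phi a ξ - cf (b - a) ξ * phi a ξ‖₊ : ℝ≥0∞)) ^ (2:ℝ)) := by ring
          _ ≤ w n s ξ * ENNReal.ofReal ((3 * ‖ξ‖) ^ 2) := mul_le_mul_right this _
      · -- finiteness of the dominant
        have hpt : ∀ ξ : Euc n, w n s ξ * ENNReal.ofReal ((3 * ‖ξ‖) ^ 2)
            ≤ ENNReal.ofReal 9 * w n (s+1) ξ := by
          intro ξ
          simp only [w]
          rw [← ENNReal.ofReal_mul (Real.rpow_nonneg (one_add_sq_pos ξ).le s),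
            ← ENNReal.ofReal_mul (by norm_num)]
          apply ENNReal.ofReal_le_ofReal
          have hpos := one_add_sq_pos ξ
          have h5 : (1 + ‖ξ‖ ^ 2) ^ (s+1) = (1 + ‖ξ‖ ^ 2) ^ s * (1 + ‖ξ‖ ^ 2) :=
            Real.rpow_add_one hpos.ne' s
          have h6 : (0:ℝ) ≤ (1 + ‖ξ‖ ^ 2) ^ s := Real.rpow_nonneg hpos.le s
          have h7 : ‖ξ‖ ^ 2 ≤ 1 + ‖ξ‖ ^ 2 := by nlinarith
          calc (1 + ‖ξ‖ ^ 2) ^ s * (3 * ‖ξ‖) ^ 2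
              = (1 + ‖ξ‖ ^ 2) ^ s * (9 * ‖ξ‖ ^ 2) := by ring
            _ ≤ (1 + ‖ξ‖ ^ 2) ^ s * (9 * (1 + ‖ξ‖ ^ 2)) := by nlinarith
            _ = 9 * ((1 + ‖ξ‖ ^ 2) ^ (s+1)) := by rw [h5]; ring
        refine ne_of_lt (lt_of_le_of_lt (lintegral_mono hpt) ?_)
        rw [lintegral_const_mul' _ _ (by simp)]
        exact ENNReal.mul_lt_top (by simp) (W_fin hs1).lt_top
      · refine Filter.Eventually.of_forall fun ξ => ?_
        -- pointwise convergence to 0 via the quadratic estimate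
        refine tendsto_of_tendsto_of_tendsto_of_le_of_le (g := fun _ => (0:ℝ≥0∞))
          (h := fun b => w n s ξ * ENNReal.ofReal ((3 * ‖b - a‖ * ‖ξ‖ ^ 2) ^ 2))
          tendsto_const_nhds ?_ (fun b => by simp) ?_
        · have hreal : Filter.Tendsto (fun b : Euc n => (3 * ‖b - a‖ * ‖ξ‖ ^ 2) ^ 2) (𝓝 a)
              (𝓝 0) := by
            have hc : Continuous fun b : Euc n => (3 * ‖b - a‖ * ‖ξ‖ ^ 2) ^ 2 := by fun_prop
            have := hc.tendsto a
            simpa using this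
          have := (ENNReal.continuous_ofReal.tendsto 0).comp hreal
          simp only [ENNReal.ofReal_zero] at this
          simpa using ENNReal.Tendsto.const_mul this (Or.inr (w_ne_top ξ))
        · intro b
          have hq : ‖b - a‖⁻¹ * ‖phi b ξ - phi a ξ - cf (b - a) ξ * phi a ξ‖
              ≤ 3 * ‖b - a‖ * ‖ξ‖ ^ 2 := by
            have h1 := norm_r a b ξ
            have h2 : min ((⟪b - a, ξ⟫ : ℝ)^2) |(⟪b - a, ξ⟫ : ℝ)| ≤ (⟪b - a, ξ⟫ : ℝ)^2 :=
              min_le_left _ _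
            have h3 : |(⟪b - a, ξ⟫ : ℝ)| ≤ ‖b - a‖ * ‖ξ‖ := abs_real_inner_le_norm _ _
            have h4 : (⟪b - a, ξ⟫ : ℝ)^2 ≤ (‖b - a‖ * ‖ξ‖) ^ 2 := by
              have hsq := _root_.sq_abs (⟪b - a, ξ⟫ : ℝ)
              nlinarith [abs_nonneg (⟪b - a, ξ⟫ : ℝ), norm_nonneg (b - a), norm_nonneg ξ]
            have h5 : ‖phi b ξ - phi a ξ - cf (b - a) ξ * phi a ξ‖
                ≤ ‖b - a‖ * (3 * ‖b - a‖ * ‖ξ‖ ^ 2) := by nlinarith [norm_nonneg (b-a), norm_nonneg ξ]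
            calc ‖b - a‖⁻¹ * ‖phi b ξ - phi a ξ - cf (b - a) ξ * phi a ξ‖
                ≤ ‖b - a‖⁻¹ * (‖b - a‖ * (3 * ‖b - a‖ * ‖ξ‖ ^ 2)) := by
                  apply mul_le_mul_of_nonneg_left h5 (by positivity)
              _ ≤ 3 * ‖b - a‖ * ‖ξ‖ ^ 2 := inv_mul_le _ _ (norm_nonneg _) (by positivity)
          have := sq_helper (c := ‖b - a‖⁻¹) (rz := ‖phi b ξ - phi a ξ - cf (b - a) ξ * phi a ξ‖)
            (by positivity) (norm_nonneg _) hq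
          rw [← enorm_eq] at this
          calc ENNReal.ofReal (‖b - a‖⁻¹) ^ (2:ℝ)
                * (w n s ξ * ((‖phi b ξ - phi a ξ - cf (b - a) ξ * phi a ξ‖₊ : ℝ≥0∞)) ^ (2:ℝ))
              = w n s ξ * (ENNReal.ofReal (‖b - a‖⁻¹) ^ (2:ℝ)
                * ((‖phi b ξ - phi a ξ - cf (b - a) ξ * phi a ξ‖₊ : ℝ≥0∞)) ^ (2:ℝ)) := by ring
            _ ≤ w n s ξ * ENNReal.ofReal ((3 * ‖b - a‖ * ‖ξ‖ ^ 2) ^ 2) := mul_le_mul_right this _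
    rw [show (∫⁻ ξ, (fun _ : Euc n => (0:ℝ≥0∞)) ξ ∂(volume : Measure (Euc n))) = 0 by simp]
      at hmain
    exact hmain.congr fun b => (hG b).symm
  -- conclude
  have heq : ∀ b, ‖b - a‖⁻¹ * ‖Fmap hs b - Fmap hs a - (mulT n s) (Fmap hs1 a) (b - a)‖
      = ((A b) ^ ((1:ℝ)/2)).toReal := by
    intro b
    rw [hnorm b]
    simp only [hA_def]
    rw [ENNReal.mul_rpow_of_nonneg _ _ (by norm_num : (0:ℝ) ≤ 1/2), ← ENNReal.rpow_mul,
      show (2:ℝ) * (1/2) = 1 by norm_num, ENNReal.rpow_one, ENNReal.toReal_mul,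
      ENNReal.toReal_ofReal (by positivity)]
  have := aux_tendsto hAtendsto
  exact this.congr fun b => (heq b).symm

lemma contDiff_Fmap (k : ℕ) (s : ℝ) (hs : s + k < -((n:ℝ)/2)) (hs' : s < -((n:ℝ)/2)) :
    ContDiff ℝ (k : ℕ∞) (Fmap hs') := by
  induction k generalizing s with
  | zero =>
    push_cast
    rw [contDiff_zero]
    exact continuous_Fmap hs'
  | succ k ih =>
    have hs1 : (s + 1) + k < -((n:ℝ)/2) := by push_cast at hs ⊢; linarith
    have hs1' : s + 1 < -((n:ℝ)/2) := by
      have hk : (0:ℝ) ≤ k := Nat.cast_nonneg k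
      push_cast at hs; linarith
    have hd : ∀ a, HasFDerivAt (Fmap hs') ((mulT n s) (Fmap hs1' a)) a := fun a =>
      hasFDerivAt_Fmap hs1' a
    push_cast
    rw [contDiff_succ_iff_fderiv]
    refine ⟨fun a => (hd a).differentiableAt, ?_, ?_⟩
    · intro h
      exact absurd h (by simp)
    · have hfd : (fderiv ℝ (Fmap hs')) = fun a => (mulT n s) (Fmap hs1' a) :=
        funext fun a => (hd a).fderiv
      rw [hfd]
      exact (mulT n s).contDiff.comp (ih (s+1) hs1 hs1')

end DiracSobolev

/-- For every nonnegative integer `k`, the map `a ↦ δ_a` from `ℝⁿ` to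
`H^{-n/2-k-1}(ℝⁿ)` is of class `C^k`.  Here `H^s` is realized on the Fourier side as
`L²` of the weighted measure `(1+|ξ|²)^s dξ`, and `δ_a` corresponds to its Fourier
transform `ξ ↦ e^{-i⟨a,ξ⟩}`. -/
theorem dirac_delta_Ck_into_sobolev (n : ℕ) (k : ℕ) :
    ∃ F : EuclideanSpace ℝ (Fin n) →
        Lp ℂ 2 (sobolevWeight n (-(n / 2 : ℝ) - k - 1)),
      (∀ a, (F a : EuclideanSpace ℝ (Fin n) → ℂ)
          =ᵐ[sobolevWeight n (-(n / 2 : ℝ) - k - 1)]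
            fun ξ => Complex.exp (-(⟪a, ξ⟫ : ℝ) * Complex.I)) ∧
      ContDiff ℝ (k : ℕ∞) F := by
  have hs : (-(n / 2 : ℝ) - k - 1) + k < -((n:ℝ)/2) := by linarith
  have hs' : (-(n / 2 : ℝ) - k - 1) < -((n:ℝ)/2) := by
    have hk : (0:ℝ) ≤ k := Nat.cast_nonneg k
    linarith
  refine ⟨DiracSobolev.Fmap hs', fun a => ?_, DiracSobolev.contDiff_Fmap k _ hs hs'⟩
  exact MemLp.coeFn_toLp _
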